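/- Let S ⊆ H with |S| > 1 and h_0 ∈ S with π_S(h_0) > 1/2, and let T^g_S be the corresponding subtree of the greedy query tree, with R_0 = S \ {h_0}. Then the cost of identifying h_0 in the greedy subtree satisfies c_{T^g_S}(h_0) ≤ 2 · C*(h_0) · ( ln( π(R_0) / min_{h∈R_0} π(h) ) + 1 ), where C*(h_0) is the cost of identifying h_0 in any query tree T* whose leaves contain S. -/

import Mathlib

/-!
Along the greedy path of `h₀`, let `W` be the mass of the competitors `S' \ {h₀}` still alive.
Since `h₀` holds a majority of every version space on its path, the shrinkage of any question `j`
lies between the mass `w_j` it separates from `h₀` and `2 w_j`. The path of `h₀` in `T*` separates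
every competitor, so `W ≤ ∑_{j ∈ path} w_j`, while the greedy choice `i` forces
`w_j ≤ 2 c_j w_i / c_i`. Hence `c_i W ≤ 2 C*(h₀) w_i`, that is
`c_i ≤ 2 C*(h₀) (1 - W'/W) ≤ 2 C*(h₀) (log W - log W')` with `W'` the competitor mass after the
question. These bounds telescope; the last question, which isolates `h₀`, costs at most `2 C*(h₀)`,
and the final `W` is at least the minimal weight.
-/

open Finset

namespace ActiveLearning

variable {H A : Type*} {m : ℕ}

/-- The total mass of a weight function `v` on a finite set `S`. -/
def mass (v : H → ℝ) (S : Finset H) : ℝ := ∑ s ∈ S, v s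

/-- `v` restricted to `S` and normalized. -/
noncomputable def restrict [DecidableEq H] (v : H → ℝ) (S : Finset H) : H → ℝ :=
  fun h => if h ∈ S then v h / mass v S else 0

/-- The shrinkage `Δ` of a question `qi` on `(S, v)`. -/
noncomputable def shrink [Fintype A] [DecidableEq A] (qi : H → A)
    (S : Finset H) (v : H → ℝ) : ℝ :=
  mass v S - ∑ j : A, (mass v (S.filter fun s => qi s = j)) ^ 2 / mass v S

/-- The collision probability of a distribution `v`. -/
def CP [Fintype H] (v : H → ℝ) : ℝ := ∑ z : H, (v z) ^ 2

/-- Query trees: internal nodes are questions (indexed by `Fin m`), branches are answers,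
leaves are hypotheses. -/
inductive QTree (m : ℕ) (H A : Type*) : Type _
  | leaf : H → QTree m H A
  | node : Fin m → (A → QTree m H A) → QTree m H A

/-- Follow the answers of hypothesis `h` down the tree, returning the leaf reached. -/
def follow (q : Fin m → H → A) : QTree m H A → H → H
  | .leaf h', _ => h'
  | .node i ch, h => follow q (ch (q i h)) h

/-- The cost `c_T(h)`: sum of costs of the questions on the root-to-`h` path. -/
def pathCost (q : Fin m → H → A) (c : Fin m → ℝ) : QTree m H A → H → ℝ
  | .leaf _, _ => 0
  | .node i ch, h => c i + pathCost q c (ch (q i h)) h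

/-- The leaves of `T` include `S`: every `h ∈ S` is identified by `T`. -/
def ValidOn (q : Fin m → H → A) (T : QTree m H A) (S : Finset H) : Prop :=
  ∀ h ∈ S, follow q T h = h

/-- The expected cost `C(T, v)` of a query tree `T` under weights `v`. -/
noncomputable def treeCost [Fintype H] (q : Fin m → H → A) (c : Fin m → ℝ)
    (T : QTree m H A) (v : H → ℝ) : ℝ :=
  ∑ h : H, v h * pathCost q c T h

/-- The questions asked along the root-to-`h` path. -/
def pathQs (q : Fin m → H → A) : QTree m H A → H → List (Fin m)
  | .leaf _, _ => []
  | .node i ch, h => i :: pathQs q (ch (q i h)) h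

/-- `T` is a greedy query tree for `π` on version space `S`: at every node it asks a question
maximizing the shrinkage-cost ratio and recurses on each nonempty answer class. -/
inductive IsGreedy [Fintype A] [DecidableEq A] [DecidableEq H]
    (q : Fin m → H → A) (c : Fin m → ℝ) (π : H → ℝ) :
    QTree m H A → Finset H → Prop
  | leaf (h : H) : IsGreedy q c π (.leaf h) {h}
  | node (S : Finset H) (i : Fin m) (ch : A → QTree m H A)
      (hcard : 1 < S.card)
      (hmax : ∀ j : Fin m,
        shrink (q j) S (restrict π S) / c j ≤ shrink (q i) S (restrict π S) / c i)
      (hch : ∀ a : A, (S.filter fun s => q i s = a).Nonempty →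
        IsGreedy q c π (ch a) (S.filter fun s => q i s = a)) :
      IsGreedy q c π (.node i ch) S

/-- `T` is an `ε`-approximate greedy query tree for `π` on version space `S`. -/
inductive IsApproxGreedy [Fintype A] [DecidableEq A] [DecidableEq H]
    (ε : ℝ) (q : Fin m → H → A) (c : Fin m → ℝ) (π : H → ℝ) :
    QTree m H A → Finset H → Prop
  | leaf (h : H) : IsApproxGreedy ε q c π (.leaf h) {h}
  | node (S : Finset H) (i : Fin m) (ch : A → QTree m H A)
      (hcard : 1 < S.card)
      (happrox : ∀ j : Fin m,
        (1 - ε) * (shrink (q j) S (restrict π S) / c j) ≤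
          shrink (q i) S (restrict π S) / c i)
      (hch : ∀ a : A, (S.filter fun s => q i s = a).Nonempty →
        IsApproxGreedy ε q c π (ch a) (S.filter fun s => q i s = a)) :
      IsApproxGreedy ε q c π (.node i ch) S

/-- `T` is irreducible on version space `S`: every asked question strictly splits the
surviving set. -/
inductive Irreducible [DecidableEq A] (q : Fin m → H → A) :
    QTree m H A → Finset H → Prop
  | leaf (h : H) (S : Finset H) : Irreducible q (.leaf h) S
  | node (S : Finset H) (i : Fin m) (ch : A → QTree m H A)
      (hsplit : ∃ s ∈ S, ∃ t ∈ S, q i s ≠ q i t)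
      (hch : ∀ a : A, (S.filter fun s => q i s = a).Nonempty →
        Irreducible q (ch a) (S.filter fun s => q i s = a)) :
      Irreducible q (.node i ch) S

section Mass

variable {v : H → ℝ}

lemma mass_nonneg (hv : ∀ h, 0 ≤ v h) (S : Finset H) : 0 ≤ mass v S :=
  sum_nonneg fun s _ => hv s

lemma mass_pos (hv : ∀ h, 0 < v h) {S : Finset H} (hS : S.Nonempty) : 0 < mass v S :=
  sum_pos (fun s _ => hv s) hS

lemma mass_mono (hv : ∀ h, 0 ≤ v h) {S T : Finset H} (hST : S ⊆ T) : mass v S ≤ mass v T :=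
  sum_le_sum_of_subset_of_nonneg hST fun h _ _ => hv h

lemma le_mass_of_mem (hv : ∀ h, 0 ≤ v h) {S : Finset H} {h : H} (hS : h ∈ S) :
    v h ≤ mass v S :=
  single_le_sum (fun s _ => hv s) hS

lemma mass_erase_add [DecidableEq H] {S : Finset H} {h : H} (hS : h ∈ S) :
    mass v (S.erase h) + v h = mass v S :=
  sum_erase_add S v hS

lemma mass_filter_add_mass_filter_not (S : Finset H) (p : H → Prop) [DecidablePred p] :
    mass v (S.filter p) + mass v (S.filter fun s => ¬p s) = mass v S :=
  sum_filter_add_sum_filter_not S p v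

lemma mass_filter_eq_add_mass_filter_ne [DecidableEq A] (f : H → A) (S : Finset H) (a : A) :
    mass v (S.filter fun s => f s = a) + mass v (S.filter fun s => f s ≠ a) = mass v S :=
  mass_filter_add_mass_filter_not S (f · = a)

lemma mass_erase_eq_mass_filter_ne_add [DecidableEq H] [DecidableEq A] (f : H → A)
    {S : Finset H} {h : H} (hS : h ∈ S) :
    mass v (S.erase h) =
      mass v (S.filter fun s => f s ≠ f h) + mass v ((S.filter fun s => f s = f h).erase h) := by
  have := mass_erase_add (v := v) hS
  have := mass_erase_add (v := v) (mem_filter.2 ⟨hS, rfl⟩ : h ∈ S.filter fun s => f s = f h)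
  have := mass_filter_eq_add_mass_filter_ne (v := v) f S (f h)
  linarith

lemma sum_mass_fiber [Fintype A] [DecidableEq A] (f : H → A) (S : Finset H) :
    ∑ a : A, mass v (S.filter fun s => f s = a) = mass v S :=
  sum_fiberwise S f v

lemma mass_restrict [DecidableEq H] {S T : Finset H} (hTS : T ⊆ S) :
    mass (restrict v S) T = mass v T / mass v S := by
  rw [mass, mass, sum_div]
  exact sum_congr rfl fun s hs => if_pos (hTS hs)

lemma mass_le_sum_mass_filter (hv : ∀ h, 0 ≤ v h) {ι : Type*} (p : ι → H → Prop)
    [∀ j, DecidablePred (p j)] (L : List ι) {R : Finset H} (hR : ∀ s ∈ R, ∃ j ∈ L, p j s) :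
    mass v R ≤ (L.map fun j => mass v (R.filter (p j))).sum := by
  induction L generalizing R with
  | nil =>
    obtain rfl : R = ∅ := eq_empty_of_forall_notMem fun s hs => by simpa using hR s hs
    simp [mass]
  | cons j L ih =>
    have hrest : ∀ s ∈ R.filter fun s => ¬p j s, ∃ k ∈ L, p k s := fun s hs => by
      obtain ⟨hsR, hs⟩ := mem_filter.1 hs
      simpa [hs] using hR s hsR
    calc mass v R = mass v (R.filter (p j)) + mass v (R.filter fun s => ¬p j s) :=
          (mass_filter_add_mass_filter_not R (p j)).symm
      _ ≤ mass v (R.filter (p j)) + (L.map fun k => mass v (R.filter (p k))).sum := by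
          gcongr
          refine (ih hrest).trans (List.sum_le_sum fun k _ => ?_)
          exact mass_mono hv (filter_subset_filter _ (filter_subset _ _))
      _ = _ := List.sum_cons.symm

end Mass

section Shrink

variable [Fintype A] [DecidableEq A] {v : H → ℝ}

lemma shrink_restrict [DecidableEq H] (f : H → A) (S : Finset H) :
    shrink f S (restrict v S) = shrink f S v / mass v S := by
  have hfib : ∀ a : A, mass (restrict v S) (S.filter fun s => f s = a) =
      mass v (S.filter fun s => f s = a) / mass v S := fun a =>
    mass_restrict (filter_subset _ _)
  simp only [shrink, hfib, mass_restrict (Subset.refl S)]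
  rcases eq_or_ne (mass v S) 0 with h0 | h0
  · simp [h0]
  · simp only [div_self h0, div_one]
    rw [sub_div, div_self h0, sum_div]
    congr 1
    exact sum_congr rfl fun a _ => by ring

lemma shrink_le_two_mul_mass_filter_ne (hv : ∀ h, 0 ≤ v h) (f : H → A) (S : Finset H)
    (a : A) : shrink f S v ≤ 2 * mass v (S.filter fun s => f s ≠ a) := by
  set g : A → ℝ := fun b => mass v (S.filter fun s => f s = b)
  have hsplit := mass_filter_eq_add_mass_filter_ne (v := v) f S a
  have hga : 2 * g a - mass v S ≤ ∑ b, g b ^ 2 / mass v S := by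
    rw [← sum_div]
    rcases (mass_nonneg hv S).eq_or_lt with hM | hM
    · rw [← hM, div_zero]
      linarith [mass_nonneg hv (S.filter fun s => f s ≠ a)]
    · rw [le_div_iff₀ hM]
      have hsq : g a ^ 2 ≤ ∑ b, g b ^ 2 :=
        single_le_sum (f := fun b => g b ^ 2) (fun b _ => sq_nonneg _) (mem_univ a)
      nlinarith [sq_nonneg (g a - mass v S)]
  rw [shrink]
  linarith

lemma mass_filter_ne_le_shrink (hv : ∀ h, 0 ≤ v h) (f : H → A) (S : Finset H) {a : A}
    (hmaj : mass v S ≤ 2 * mass v (S.filter fun s => f s = a)) :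
    mass v (S.filter fun s => f s ≠ a) ≤ shrink f S v := by
  set g : A → ℝ := fun b => mass v (S.filter fun s => f s = b)
  set r := mass v (S.filter fun s => f s ≠ a)
  have hsplit : g a + r = mass v S := mass_filter_eq_add_mass_filter_ne f S a
  have hr : 0 ≤ r := mass_nonneg hv _
  have hrest : ∑ b ∈ univ.erase a, g b = r := by
    have := add_sum_erase univ g (mem_univ a)
    rw [sum_mass_fiber] at this
    linarith
  have hsq : ∑ b, g b ^ 2 ≤ g a ^ 2 + r ^ 2 := by
    rw [← add_sum_erase univ _ (mem_univ a), ← hrest]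
    gcongr
    exact sum_sq_le_sq_sum_of_nonneg fun b _ => mass_nonneg hv _
  have hfrac : ∑ b, g b ^ 2 / mass v S ≤ g a := by
    rw [← sum_div]
    refine div_le_of_le_mul₀ (mass_nonneg hv S) (mass_nonneg hv _) ?_
    nlinarith
  rw [shrink]
  linarith

end Shrink

section Trees

variable (q : Fin m → H → A)

lemma pathCost_eq_sum_map_pathQs (c : Fin m → ℝ) :
    ∀ (T : QTree m H A) (h : H), pathCost q c T h = ((pathQs q T h).map c).sum
  | .leaf _, _ => rfl
  | .node i ch, h => by
    simp [pathCost, pathQs, pathCost_eq_sum_map_pathQs c (ch (q i h)) h]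

lemma exists_mem_pathQs_ne_of_follow_eq :
    ∀ (T : QTree m H A) {s h : H}, follow q T s = s → follow q T h = h → s ≠ h →
      ∃ j ∈ pathQs q T h, q j s ≠ q j h
  | .leaf _, _, _, hs, hh, hne => absurd (hs.symm.trans hh) hne
  | .node i ch, s, h, hs, hh, hne => by
    by_cases hq : q i s = q i h
    · rw [follow, hq] at hs
      obtain ⟨j, hj, hjne⟩ := exists_mem_pathQs_ne_of_follow_eq (ch (q i h)) hs hh hne
      exact ⟨j, List.mem_cons_of_mem _ hj, hjne⟩
    · exact ⟨i, List.mem_cons_self, hq⟩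

end Trees

lemma le_mul_log_sub_log {a C x y : ℝ} (hC : 0 ≤ C) (hx : 0 < x) (hy : 0 < y)
    (h : a * x ≤ C * (x - y)) : a ≤ C * (Real.log x - Real.log y) := by
  have hfrac : a ≤ C * (1 - y / x) := by
    rw [show C * (1 - y / x) = C * (x - y) / x by field_simp, le_div_iff₀ hx]
    exact h
  have hlog : 1 - y / x ≤ Real.log x - Real.log y := by
    have := Real.one_sub_inv_le_log_of_pos (div_pos hx hy)
    rwa [inv_div, Real.log_div hx.ne' hy.ne'] at this
  exact hfrac.trans (mul_le_mul_of_nonneg_left hlog hC)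

section Greedy

variable [Fintype A] [DecidableEq A] [DecidableEq H] {q : Fin m → H → A} {c : Fin m → ℝ}
  {π : H → ℝ}

lemma IsGreedy.pathCost_eq_zero_of_card_le_one {T : QTree m H A} {S : Finset H}
    (hT : IsGreedy q c π T S) (hS : S.card ≤ 1) (h : H) : pathCost q c T h = 0 := by
  cases hT with
  | leaf => rfl
  | node _ _ _ hcard => omega

lemma cost_mul_mass_erase_le_of_greedy_choice (hπ : ∀ h, 0 < π h) (hc : ∀ j, 0 < c j)
    {S : Finset H} {i : Fin m}
    (hmax : ∀ j, shrink (q j) S (restrict π S) / c j ≤ shrink (q i) S (restrict π S) / c i)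
    {h0 : H} (h0S : h0 ∈ S) (hmaj : mass π S ≤ 2 * π h0) {L : List (Fin m)}
    (hL : ∀ s ∈ S.erase h0, ∃ j ∈ L, q j s ≠ q j h0) :
    c i * mass π (S.erase h0) ≤
      2 * (L.map c).sum * mass π (S.filter fun s => q i s ≠ q i h0) := by
  have hπ' : ∀ h, 0 ≤ π h := fun h => (hπ h).le
  have hM : 0 < mass π S := mass_pos hπ ⟨h0, h0S⟩
  have hratio : ∀ j, shrink (q j) S π / c j ≤ shrink (q i) S π / c i := fun j => by
    have := hmax j
    rwa [shrink_restrict, shrink_restrict, div_right_comm, div_right_comm (shrink (q i) S π),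
      div_le_div_iff_of_pos_right hM] at this
  set w : Fin m → ℝ := fun j => mass π (S.filter fun s => q j s ≠ q j h0)
  have hw : ∀ j, w j ≤ c j * (2 * w i / c i) := fun j =>
    have hclass : mass π S ≤ 2 * mass π (S.filter fun s => q j s = q j h0) :=
      hmaj.trans (by gcongr; exact le_mass_of_mem hπ' (mem_filter.2 ⟨h0S, rfl⟩))
    calc w j ≤ shrink (q j) S π := mass_filter_ne_le_shrink hπ' (q j) S hclass
      _ = c j * (shrink (q j) S π / c j) := by field_simp [(hc j).ne']
      _ ≤ c j * (shrink (q i) S π / c i) := mul_le_mul_of_nonneg_left (hratio j) (hc j).le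
      _ ≤ c j * (2 * w i / c i) := by
        gcongr
        exacts [(hc j).le, (hc i).le, shrink_le_two_mul_mass_filter_ne hπ' (q i) S (q i h0)]
  calc c i * mass π (S.erase h0)
      ≤ c i * (L.map fun j => mass π ((S.erase h0).filter fun s => q j s ≠ q j h0)).sum := by
        gcongr
        exacts [(hc i).le, mass_le_sum_mass_filter hπ' _ L hL]
    _ ≤ c i * (L.map fun j => c j * (2 * w i / c i)).sum := by
        gcongr
        · exact (hc i).le
        · refine List.sum_le_sum fun j _ => (mass_mono hπ' ?_).trans (hw j)
          exact filter_subset_filter _ (erase_subset _ _)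
    _ = 2 * (L.map c).sum * w i := by
        rw [List.sum_map_mul_right]
        field_simp [(hc i).ne']

theorem IsGreedy.pathCost_le_log (hπ : ∀ h, 0 < π h) (hc : ∀ j, 0 < c j)
    {T : QTree m H A} {S : Finset H} (hT : IsGreedy q c π T S) {h0 : H} (h0S : h0 ∈ S)
    (hmaj : mass π S ≤ 2 * π h0) {L : List (Fin m)}
    (hL : ∀ s ∈ S.erase h0, ∃ j ∈ L, q j s ≠ q j h0) {μ : ℝ} (hμ : 0 < μ)
    (hμS : ∀ s ∈ S.erase h0, μ ≤ π s) (hR : (S.erase h0).Nonempty) :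
    pathCost q c T h0 ≤
      2 * (L.map c).sum * (Real.log (mass π (S.erase h0)) - Real.log μ + 1) := by
  have hπ' : ∀ h, 0 ≤ π h := fun h => (hπ h).le
  have hC : 0 ≤ (L.map c).sum := List.sum_nonneg (by simpa using fun j _ => (hc j).le)
  induction hT with
  | leaf h =>
    obtain rfl := mem_singleton.1 h0S
    simp at hR
  | node S i ch hcard hmax hch ih =>
    set S₁ := S.filter fun s => q i s = q i h0
    have h0S₁ : h0 ∈ S₁ := mem_filter.2 ⟨h0S, rfl⟩
    have hR₁S : S₁.erase h0 ⊆ S.erase h0 := erase_subset_erase _ (filter_subset _ _)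
    have hW : 0 < mass π (S.erase h0) := mass_pos hπ hR
    have hsplit := mass_erase_eq_mass_filter_ne_add (v := π) (q i) h0S
    have hstep := cost_mul_mass_erase_le_of_greedy_choice hπ hc hmax h0S hmaj hL
    change c i + pathCost q c (ch (q i h0)) h0 ≤ _
    by_cases hR₁ : (S₁.erase h0).Nonempty
    · have ih₁ := ih (q i h0) ⟨h0, h0S₁⟩ h0S₁
        (hmaj.trans' (mass_mono hπ' (filter_subset _ _)))
        (fun s hs => hL s (hR₁S hs)) (fun s hs => hμS s (hR₁S hs)) hR₁
      rw [show mass π (S.filter fun s => q i s ≠ q i h0) =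
        mass π (S.erase h0) - mass π (S₁.erase h0) by linarith] at hstep
      have hci := le_mul_log_sub_log (by positivity) hW (mass_pos hπ hR₁) hstep
      linarith
    · have hleaf : pathCost q c (ch (q i h0)) h0 = 0 := by
        refine (hch _ ⟨h0, h0S₁⟩).pathCost_eq_zero_of_card_le_one ?_ h0
        rw [← card_erase_add_one h0S₁, not_nonempty_iff_eq_empty.1 hR₁, card_empty]
      have hW₁ : mass π (S₁.erase h0) = 0 := by rw [not_nonempty_iff_eq_empty.1 hR₁]; rfl
      rw [show mass π (S.filter fun s => q i s ≠ q i h0) = mass π (S.erase h0) by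
        linarith] at hstep
      have hci : c i ≤ 2 * (L.map c).sum := le_of_mul_le_mul_right hstep hW
      obtain ⟨s, hs⟩ := hR
      have hlog : Real.log μ ≤ Real.log (mass π (S.erase h0)) :=
        Real.log_le_log hμ ((hμS s hs).trans (le_mass_of_mem hπ' hs))
      rw [hleaf]
      nlinarith

end Greedy

theorem greedy_path_cost_bound_general [Fintype A] [DecidableEq H] [DecidableEq A]
    (π : H → ℝ) (hπpos : ∀ h, 0 < π h)
    (q : Fin m → H → A) (c : Fin m → ℝ) (hc : ∀ i, 0 < c i)
    (S : Finset H)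
    (h0 : H) (h0S : h0 ∈ S) (hh0 : 1 / 2 < restrict π S h0)
    (hR0 : (S.erase h0).Nonempty)
    (Tg : QTree m H A) (hTg : IsGreedy q c π Tg S)
    (Tstar : QTree m H A) (hTstar : ValidOn q Tstar S) :
    pathCost q c Tg h0 ≤
      2 * pathCost q c Tstar h0 *
        (Real.log (mass π (S.erase h0) / (S.erase h0).inf' hR0 π) + 1) := by
  have hmaj : mass π S ≤ 2 * π h0 := by
    rw [restrict, if_pos h0S, lt_div_iff₀ (mass_pos hπpos ⟨h0, h0S⟩)] at hh0
    linarith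
  have hsep : ∀ s ∈ S.erase h0, ∃ j ∈ pathQs q Tstar h0, q j s ≠ q j h0 := fun s hs =>
    exists_mem_pathQs_ne_of_follow_eq q Tstar (hTstar s (mem_of_mem_erase hs))
      (hTstar h0 h0S) (ne_of_mem_erase hs)
  have hμ : 0 < (S.erase h0).inf' hR0 π := (lt_inf'_iff hR0).2 fun s _ => hπpos s
  rw [pathCost_eq_sum_map_pathQs q c Tstar, Real.log_div (mass_pos hπpos hR0).ne' hμ.ne']
  exact hTg.pathCost_le_log hπpos hc h0S hmaj hsep hμ (fun s hs => inf'_le π hs) hR0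

/-- If `h_0 ∈ S` has `π_S(h_0) > 1/2` and `T^g_S` is the greedy subtree on
`S` with `R_0 = S \ {h_0}`, then the cost of identifying `h_0` in the greedy subtree
satisfies `c_{T^g_S}(h_0) ≤ 2 · C*(h_0) · ( ln( π(R_0) / min_{h∈R_0} π(h) ) + 1 )`. -/
theorem greedy_path_cost_bound [Fintype H] [Fintype A] [DecidableEq H] [DecidableEq A]
    (π : H → ℝ) (hπpos : ∀ h, 0 < π h) (hπsum : ∑ h : H, π h = 1)
    (hH : 1 < Fintype.card H)
    (q : Fin m → H → A) (c : Fin m → ℝ) (hc : ∀ i, 0 < c i)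
    (hdist : ∀ h h' : H, h ≠ h' → ∃ i : Fin m, q i h ≠ q i h')
    (S : Finset H) (hS : 1 < S.card)
    (h0 : H) (h0S : h0 ∈ S) (hh0 : 1 / 2 < restrict π S h0)
    (hR0 : (S.erase h0).Nonempty)
    (Tg : QTree m H A) (hTg : IsGreedy q c π Tg S)
    (Tstar : QTree m H A) (hTstar : ValidOn q Tstar S) :
    pathCost q c Tg h0 ≤
      2 * pathCost q c Tstar h0 *
        (Real.log (mass π (S.erase h0) / (S.erase h0).inf' hR0 π) + 1) :=
  greedy_path_cost_bound_general π hπpos q c hc S h0 h0S hh0 hR0 Tg hTg Tstar hTstar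

end ActiveLearning
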